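/- arXiv:2212.01171 — 3 statements merged into one kernel-verified Lean document; each statement's English description precedes it below -/
import Mathlib

section
/- Under the hypotheses of the previous statement (existence of a nonempty closed irreducible component U on which every propensity is somewhere positive), the stoichiometric matrix T whose columns are the jump vectors ζ_1, …, ζ_r admits a strictly positive vector in its kernel: there exists x ∈ ℝ_{>0}^r with Tx = 0. -/
/-!
Along an admissible path every jump adds some `ζ j`, so a path from `n + ζ k` back to `n` inside
the closed irreducible class `U` writes `-ζ k` as a nonnegative integer combination
`∑ j, a k j • ζ j`. Summing the identities `ζ k + ∑ j, a k j • ζ j = 0` over `k` shows that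
the weights `1 + ∑ j, a j k` form a strictly positive kernel vector.
-/

open Finset

theorem Relation.ReflTransGen.exists_eq_add_sum_nsmul {M ι : Type*} [AddCommMonoid M]
    [Fintype ι] [DecidableEq ι] (ζ : ι → M) {R : M → M → Prop}
    (hR : ∀ x y, R x y → ∃ k, y = x + ζ k) {m n : M} (h : Relation.ReflTransGen R m n) :
    ∃ c : ι → ℕ, n = m + ∑ j, c j • ζ j := by
  induction h with
  | refl => exact ⟨0, by simp⟩
  | tail _ hstep ih =>
    obtain ⟨c, rfl⟩ := ih
    obtain ⟨k, rfl⟩ := hR _ _ hstep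
    refine ⟨c + Pi.single k 1, ?_⟩
    simp only [Pi.add_apply, add_smul, sum_add_distrib, Pi.single_apply, ite_smul, one_smul,
      zero_smul, sum_ite_eq', mem_univ, if_true, add_assoc]

theorem exists_pos_nsmul_sum_eq_zero {M ι : Type*} [AddCommMonoid M] [Fintype ι]
    (ζ : ι → M) (h : ∀ k, ∃ a : ι → ℕ, ζ k + ∑ j, a j • ζ j = 0) :
    ∃ w : ι → ℕ, (∀ k, 0 < w k) ∧ ∑ k, w k • ζ k = 0 := by
  choose a ha using h
  refine ⟨fun k => 1 + ∑ j, a j k, fun k => Nat.add_pos_left Nat.one_pos _, ?_⟩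
  calc ∑ k, (1 + ∑ j, a j k) • ζ k
      = ∑ j, (ζ j + ∑ k, a j k • ζ k) := by
        simp only [add_smul, one_smul, sum_smul, sum_add_distrib]
        rw [sum_comm]
    _ = 0 := by simp [ha]

theorem stmt_8_general (d r : ℕ) (ζ : Fin r → Fin d → ℤ)
    (lam : Fin r → (Fin d → ℤ) → ℝ)
    (U : Set (Fin d → ℤ))
    (hclosed : ∀ n ∈ U, ∀ k, 0 < lam k n → n + ζ k ∈ U)
    (hirr : ∀ m ∈ U, ∀ n ∈ U,
      Relation.ReflTransGen (fun x y => ∃ k, 0 < lam k x ∧ y = x + ζ k) m n)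
    (hpos : ∀ k, ∃ n ∈ U, 0 < lam k n) :
    ∃ x : Fin r → ℝ, (∀ k, 0 < x k) ∧ ∀ i, ∑ k, x k * (ζ k i : ℝ) = 0 := by
  have hneg : ∀ k, ∃ a : Fin r → ℕ, ζ k + ∑ j, a j • ζ j = 0 := by
    intro k
    obtain ⟨n, hnU, hlam⟩ := hpos k
    obtain ⟨a, ha⟩ := (hirr _ (hclosed n hnU k hlam) n hnU).exists_eq_add_sum_nsmul ζ
      fun _ _ ⟨j, _, hj⟩ => ⟨j, hj⟩
    exact ⟨a, by rwa [add_assoc, left_eq_add] at ha⟩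
  obtain ⟨w, hwpos, hw⟩ := exists_pos_nsmul_sum_eq_zero ζ hneg
  refine ⟨fun k => w k, fun k => Nat.cast_pos.mpr (hwpos k), fun i => ?_⟩
  have hwi := congrFun hw i
  simp only [Finset.sum_apply, Pi.mul_apply, Pi.natCast_apply, nsmul_eq_mul, Pi.zero_apply] at hwi
  show ∑ k, (w k : ℝ) * ζ k i = 0
  exact_mod_cast hwi

/-- Under the hypotheses of Statement 7 (nonempty closed irreducible component `U`
on which every propensity is somewhere positive), the stoichiometric matrix with
columns `ζ k` admits a strictly positive real kernel vector. -/
theorem stmt_8 (d r : ℕ) (ζ : Fin r → Fin d → ℤ)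
    (lam : Fin r → (Fin d → ℤ) → ℝ)
    (U : Set (Fin d → ℤ)) (hUnn : ∀ n ∈ U, 0 ≤ n) (hUne : U.Nonempty)
    (hclosed : ∀ n ∈ U, ∀ k, 0 < lam k n → n + ζ k ∈ U)
    (hirr : ∀ m ∈ U, ∀ n ∈ U,
      Relation.ReflTransGen (fun x y => ∃ k, 0 < lam k x ∧ y = x + ζ k) m n)
    (hpos : ∀ k, ∃ n ∈ U, 0 < lam k n) :
    ∃ x : Fin r → ℝ, (∀ k, 0 < x k) ∧ ∀ i, ∑ k, x k * (ζ k i : ℝ) = 0 :=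
  stmt_8_general d r ζ lam U hclosed hirr hpos
end

section
/- Consider a continuous-time Markov chain on ℤ_{≥0}^d arising from a mass-action reaction network: reaction k has source complex ν_k, jump vector ζ_k = ν'_k − ν_k, and propensity λ_k(n) = κ_k · n!/(n − ν_k)! · 1_{n ≥ ν_k} with κ_k > 0. Suppose c ∈ ℝ_{>0}^d is a complex balanced equilibrium: for every complex ν, Σ_{k : ν'_k = ν} κ_k c^{ν_k} = Σ_{k : ν_k = ν} κ_k c^{ν_k}. Then the product-form Poisson measure π(n) = Π_{i=1}^d c_i^{n_i} / n_i! satisfies, for every state n ∈ ℤ_{≥0}^d, the stationarity equation Σ_k λ_k(n − ζ_k) π(n − ζ_k) = Σ_k λ_k(n) π(n). -/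
/-!
Write `w_k = κ_k c^{ν_k}`. Since `c^m / m! · m!/(m - ν)! = c^ν · c^{m-ν}/(m - ν)!`, each term
satisfies `λ_k(m) π(m) = w_k π(m - ν_k)` on all of `ℤ^d`, both sides vanishing unless `m ≥ ν_k`.
With `m = n - ζ_k` the inflow becomes `∑_k w_k π(n - ν'_k)` and the outflow `∑_k w_k π(n - ν_k)`.
Grouping both sums by complexes, complex balance says exactly that the total weights on each
complex agree, so the two sums are equal.
-/

open Finset

section FiberSum

variable {ι β R : Type*} [Fintype ι] [DecidableEq β] [CommSemiring R]

theorem Finset.sum_mul_comp_eq_sum_fiberwise (w : ι → R) (F : β → R) (g : ι → β)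
    (S : Finset β) (hg : ∀ k, g k ∈ S) :
    ∑ k, w k * F (g k) = ∑ v ∈ S, (∑ k ∈ univ.filter (fun k => g k = v), w k) * F v := by
  rw [← sum_fiberwise_of_maps_to (fun k _ => hg k)]
  refine sum_congr rfl fun v _ => ?_
  rw [sum_mul]
  exact sum_congr rfl fun k hk => by rw [(mem_filter.mp hk).2]

theorem Finset.sum_mul_comp_eq_of_sum_fiberwise_eq (w : ι → R) (F : β → R) (g h : ι → β)
    (hfib : ∀ v, ∑ k ∈ univ.filter (fun k => g k = v), w k =
      ∑ k ∈ univ.filter (fun k => h k = v), w k) :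
    ∑ k, w k * F (g k) = ∑ k, w k * F (h k) := by
  have hS : ∀ k, g k ∈ univ.image g ∪ univ.image h ∧ h k ∈ univ.image g ∪ univ.image h :=
    fun k => ⟨mem_union_left _ (mem_image_of_mem g (mem_univ k)),
      mem_union_right _ (mem_image_of_mem h (mem_univ k))⟩
  rw [sum_mul_comp_eq_sum_fiberwise w F g _ (fun k => (hS k).1),
    sum_mul_comp_eq_sum_fiberwise w F h _ (fun k => (hS k).2)]
  simp only [hfib]

end FiberSum

section MassAction

variable {ι K : Type*} [Fintype ι] [Field K] [CharZero K]

theorem pow_div_factorial_mul_descFactorial (x : K) {a b : ℕ} (hab : a ≤ b) :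
    x ^ b / b.factorial * b.descFactorial a = x ^ a * (x ^ (b - a) / (b - a).factorial) := by
  have hfac : ((b - a).factorial : K) * b.descFactorial a = b.factorial := by
    exact_mod_cast Nat.factorial_mul_descFactorial hab
  have hpow : x ^ b = x ^ a * x ^ (b - a) := by rw [← pow_add, Nat.add_sub_cancel' hab]
  have hD : (b.descFactorial a : K) ≠ 0 := Nat.cast_ne_zero.mpr (Nat.descFactorial_pos.mpr hab).ne'
  rw [← hfac, hpow, div_mul_eq_mul_div, mul_div_mul_right _ _ hD, mul_div_assoc]

theorem zpow_div_factorial_mul_descFactorial (x : K) {a : ℕ} {m : ℤ} (ham : (a : ℤ) ≤ m) :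
    x ^ m / (m.toNat.factorial : K) * m.toNat.descFactorial a
      = x ^ a * (x ^ (m - a) / ((m - a).toNat.factorial : K)) := by
  obtain ⟨b, rfl⟩ := Int.eq_ofNat_of_zero_le ((Int.natCast_nonneg a).trans ham)
  have hab : a ≤ b := by exact_mod_cast ham
  rw [← Nat.cast_sub hab]
  simp only [Int.toNat_natCast, zpow_natCast]
  exact pow_div_factorial_mul_descFactorial x hab

/- States range over `ℤ^d` so that `n - ζ_k` is always a state; both functions vanish off their
natural domain, as in the paper's convention. -/
open Classical in
noncomputable def massActionPropensity (κ : K) (ν : ι → ℕ) (n : ι → ℤ) : K :=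
  if (fun i => (ν i : ℤ)) ≤ n then κ * ∏ i, ((n i).toNat.descFactorial (ν i) : K) else 0

open Classical in
noncomputable def productPoisson (c : ι → K) (n : ι → ℤ) : K :=
  if 0 ≤ n then ∏ i, c i ^ (n i) / ((n i).toNat.factorial : K) else 0

theorem massActionPropensity_mul_productPoisson (κ : K) (ν : ι → ℕ) (c : ι → K) (m : ι → ℤ) :
    massActionPropensity κ ν m * productPoisson c m
      = κ * (∏ i, c i ^ ν i) * productPoisson c (m - fun i => (ν i : ℤ)) := by
  unfold massActionPropensity productPoisson
  by_cases h : (fun i => (ν i : ℤ)) ≤ m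
  · have hm : 0 ≤ m := fun i => (Int.natCast_nonneg _).trans (h i)
    have hmν : 0 ≤ m - fun i => (ν i : ℤ) := fun i => sub_nonneg.mpr (h i)
    rw [if_pos h, if_pos hm, if_pos hmν, mul_assoc, mul_assoc, ← prod_mul_distrib,
      ← prod_mul_distrib]
    congr 1
    refine prod_congr rfl fun i _ => ?_
    rw [mul_comm]
    exact zpow_div_factorial_mul_descFactorial (c i) (h i)
  · have hmν : ¬ 0 ≤ m - fun i => (ν i : ℤ) := fun h0 => h fun i => sub_nonneg.mp (h0 i)
    rw [if_neg h, if_neg hmν, zero_mul, mul_zero]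

end MassAction

open Classical in
open Finset in
theorem stmt_11_general (d r : ℕ) (ν ν' : Fin r → Fin d → ℕ)
    (κ : Fin r → ℝ)
    (c : Fin d → ℝ)
    (hcb : ∀ v : Fin d → ℕ,
      ∑ k ∈ univ.filter (fun k => ν' k = v), κ k * ∏ i, c i ^ (ν k i) =
      ∑ k ∈ univ.filter (fun k => ν k = v), κ k * ∏ i, c i ^ (ν k i))
    (lam : Fin r → (Fin d → ℤ) → ℝ)
    (hlam : ∀ k, ∀ n : Fin d → ℤ,
      lam k n = if (fun i => (ν k i : ℤ)) ≤ n
        then κ k * ∏ i, ((n i).toNat.descFactorial (ν k i) : ℝ) else 0)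
    (π : (Fin d → ℤ) → ℝ)
    (hπ : ∀ n : Fin d → ℤ,
      π n = if 0 ≤ n then ∏ i, c i ^ (n i) / ((n i).toNat.factorial : ℝ) else 0)
    (ζ : Fin r → Fin d → ℤ) (hζ : ∀ k i, ζ k i = (ν' k i : ℤ) - (ν k i : ℤ)) :
    ∀ n : Fin d → ℤ,
      ∑ k, lam k (n - ζ k) * π (n - ζ k) = ∑ k, lam k n * π n := by
  intro n
  obtain rfl : lam = fun k => massActionPropensity (κ k) (ν k) := funext₂ hlam
  obtain rfl : π = productPoisson c := funext hπ
  have hshift : ∀ k, n - ζ k - (fun i => (ν k i : ℤ)) = n - fun i => (ν' k i : ℤ) := by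
    intro k; funext i; simp only [Pi.sub_apply, hζ]; ring
  simp only [massActionPropensity_mul_productPoisson, hshift]
  exact sum_mul_comp_eq_of_sum_fiberwise_eq _ (fun v => productPoisson c (n - fun i => (v i : ℤ)))
    ν' ν hcb

open Classical in
open Finset in
/-- Stochastic deficiency zero theorem (Anderson–Craciun–Kurtz): if `c` is a complex
balanced equilibrium of the deterministic mass-action system, then the product-form
Poisson measure `π(n) = ∏ i, c_i^{n_i}/n_i!` satisfies the stationarity equations of
the chemical master equation of the stochastic mass-action system. -/
theorem stmt_11 (d r : ℕ) (ν ν' : Fin r → Fin d → ℕ)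
    (κ : Fin r → ℝ) (hκ : ∀ k, 0 < κ k)
    (c : Fin d → ℝ) (hc : ∀ i, 0 < c i)
    (hcb : ∀ v : Fin d → ℕ,
      ∑ k ∈ univ.filter (fun k => ν' k = v), κ k * ∏ i, c i ^ (ν k i) =
      ∑ k ∈ univ.filter (fun k => ν k = v), κ k * ∏ i, c i ^ (ν k i))
    (lam : Fin r → (Fin d → ℤ) → ℝ)
    (hlam : ∀ k, ∀ n : Fin d → ℤ,
      lam k n = if (fun i => (ν k i : ℤ)) ≤ n
        then κ k * ∏ i, ((n i).toNat.descFactorial (ν k i) : ℝ) else 0)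
    (π : (Fin d → ℤ) → ℝ)
    (hπ : ∀ n : Fin d → ℤ,
      π n = if 0 ≤ n then ∏ i, c i ^ (n i) / ((n i).toNat.factorial : ℝ) else 0)
    (ζ : Fin r → Fin d → ℤ) (hζ : ∀ k i, ζ k i = (ν' k i : ℤ) - (ν k i : ℤ)) :
    ∀ n : Fin d → ℤ,
      ∑ k, lam k (n - ζ k) * π (n - ζ k) = ∑ k, lam k n * π n :=
  stmt_11_general d r ν ν' κ c hcb lam hlam π hπ ζ hζ
end

section
/- Consider the reaction network on species (A, B, C) with reactions and stochastic propensities: r1: C → 0 with λ1(n) = α1 n_C; r2: 0 → C with λ2(n) = α2; r3: 0 → A with λ3(n) = α3; r4: A → B with λ4(n) = α4 n_A + α5 n_A(n_A − 1); r5: B → C with λ5(n) = α6 n_B(n_B − 1); where all α_i > 0. Define θ(n) = n_B!(n_B − 1)! n_C! · Π_{j=1}^{n_A} [α4(n_A − j + 1) + α5(n_A − j + 1)(n_A − j)] / α5 for n = (n_A, n_B, n_C) with n_B ≥ 1, and let c = (α3/α5, α3/α6, (α2 + α3)/α1). Then the measure π(n) = c_A^{n_A} c_B^{n_B} c_C^{n_C}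 / θ(n) for n_B ≥ 1 and π(n) = 0 for n_B = 0 satisfies the stationarity equations of the chemical master equation for this chain. -/
/-!
The measure has product form `π n = w_A n_A * w_B n_B * w_C n_C`, extended by zero, with
`w_A n = c_A ^ n / ∏_{k=1}^{n} λ₄(k)/α₅`, `w_B n = c_B ^ n / (n! (n-1)!)`, `w_C n = c_C ^ n / n!`.
Each weight satisfies a one-step recurrence on all of `ℤ`:
`λ₄(n) w_A n = α₃ w_A (n-1)`, `λ₅(n) w_B n = α₃ w_B (n-1)`, `α₁ n w_C n = (α₂+α₃) w_C (n-1)`,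
at the boundary of the support because the propensity vanishes there. With these the master
equation balances complex by complex, as for the complex balanced equilibrium `c`: the flux of
`r1` into `0` matches the outflow `α₂ + α₃` through `r2, r3`, the flux of `r3` into `A` matches
`r4`, that of `r4` into `B` matches `r5`, and the fluxes of `r2, r5` into `C` match `r1`.
-/

open Finset
open scoped Nat

theorem recurrence_of_vanishing_below {f r : ℤ → ℝ} {κ : ℝ} {n₀ : ℤ}
    (hf : ∀ n < n₀, f n = 0) (hr : r n₀ = 0)
    (hrec : ∀ n, n₀ < n → r n * f n = κ * f (n - 1)) (n : ℤ) :
    r n * f n = κ * f (n - 1) := by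
  rcases lt_trichotomy n n₀ with hn | rfl | hn
  · rw [hf n hn, hf (n - 1) (by omega), mul_zero, mul_zero]
  · rw [hr, hf (n - 1) (by omega), zero_mul, mul_zero]
  · exact hrec n hn

noncomputable def poissonWeight (κ : ℝ) (n : ℤ) : ℝ :=
  if 0 ≤ n then κ ^ n / (n.toNat ! : ℝ) else 0

noncomputable def factorialPairWeight (κ : ℝ) (n : ℤ) : ℝ :=
  if 1 ≤ n then κ ^ n / ((n.toNat ! : ℝ) * ((n - 1).toNat ! : ℝ)) else 0

noncomputable def prodWeight (g : ℝ → ℝ) (κ : ℝ) (n : ℤ) : ℝ :=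
  if 0 ≤ n then κ ^ n / ∏ j ∈ range n.toNat, g ((n : ℝ) - j) else 0

theorem poissonWeight_recurrence (κ : ℝ) (n : ℤ) :
    (n : ℝ) * poissonWeight κ n = κ * poissonWeight κ (n - 1) := by
  refine recurrence_of_vanishing_below (f := poissonWeight κ) (r := fun n : ℤ => (n : ℝ))
    (n₀ := 0) (fun n hn => if_neg (not_le.mpr hn)) Int.cast_zero (fun n hn => ?_) n
  obtain ⟨m, rfl⟩ : ∃ m : ℕ, n = ((m + 1 : ℕ) : ℤ) := ⟨(n - 1).toNat, by omega⟩
  rw [show ((m + 1 : ℕ) : ℤ) - 1 = m by push_cast; ring]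
  simp only [poissonWeight, if_pos (Int.natCast_nonneg _), Int.toNat_natCast, zpow_natCast,
    Nat.factorial_succ]
  push_cast
  field_simp
  ring

theorem factorialPairWeight_recurrence (κ : ℝ) (n : ℤ) :
    (n : ℝ) * (n - 1) * factorialPairWeight κ n = κ * factorialPairWeight κ (n - 1) := by
  refine recurrence_of_vanishing_below (f := factorialPairWeight κ)
    (r := fun n : ℤ => (n : ℝ) * (n - 1)) (n₀ := 1)
    (fun n hn => if_neg (not_le.mpr hn)) (by simp) (fun n hn => ?_) n
  obtain ⟨m, rfl⟩ : ∃ m : ℕ, n = ((m + 2 : ℕ) : ℤ) := ⟨(n - 2).toNat, by omega⟩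
  rw [show ((m + 2 : ℕ) : ℤ) - 1 = ((m + 1 : ℕ) : ℤ) by push_cast; ring]
  simp only [factorialPairWeight, if_pos (by omega : (1 : ℤ) ≤ ((m + 2 : ℕ) : ℤ)),
    if_pos (by omega : (1 : ℤ) ≤ ((m + 1 : ℕ) : ℤ))]
  rw [show ((m + 2 : ℕ) : ℤ) - 1 = ((m + 1 : ℕ) : ℤ) by push_cast; ring,
    show ((m + 1 : ℕ) : ℤ) - 1 = m by push_cast; ring]
  simp only [Int.toNat_natCast, zpow_natCast, Nat.factorial_succ]
  push_cast
  field_simp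
  ring

theorem prod_range_succ_sub (g : ℝ → ℝ) (m : ℕ) :
    ∏ j ∈ range (m + 1), g ((m + 1 : ℝ) - j) =
      g (m + 1) * ∏ j ∈ range m, g ((m : ℝ) - j) := by
  rw [prod_range_succ', mul_comm]
  congr 1
  · simp
  · exact prod_congr rfl fun j _ => by push_cast; ring_nf

theorem prodWeight_recurrence {g : ℝ → ℝ} (hg₀ : g 0 = 0)
    (hg : ∀ m : ℕ, g (m + 1) ≠ 0) (κ : ℝ) (n : ℤ) :
    g n * prodWeight g κ n = κ * prodWeight g κ (n - 1) := by
  refine recurrence_of_vanishing_below (f := prodWeight g κ) (r := fun n : ℤ => g n) (n₀ := 0)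
    (fun n hn => if_neg (not_le.mpr hn)) (by simpa using hg₀) (fun n hn => ?_) n
  obtain ⟨m, rfl⟩ : ∃ m : ℕ, n = ((m + 1 : ℕ) : ℤ) := ⟨(n - 1).toNat, by omega⟩
  rw [show ((m + 1 : ℕ) : ℤ) - 1 = m by push_cast; ring]
  simp only [prodWeight, if_pos (Int.natCast_nonneg _), Int.toNat_natCast, zpow_natCast,
    Int.cast_natCast]
  push_cast
  rw [prod_range_succ_sub]
  have := hg m
  field_simp
  ring

theorem ite_div_eq_prodWeight_mul (g : ℝ → ℝ) (κA κB κC : ℝ) (a b c : ℤ) :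
    (if 0 ≤ a ∧ 1 ≤ b ∧ 0 ≤ c then
      κA ^ a * κB ^ b * κC ^ c /
        ((b.toNat ! : ℝ) * ((b - 1).toNat ! : ℝ) * (c.toNat ! : ℝ) *
          ∏ j ∈ range a.toNat, g ((a : ℝ) - j))
    else 0) = prodWeight g κA a * factorialPairWeight κB b * poissonWeight κC c := by
  unfold prodWeight factorialPairWeight poissonWeight
  split_ifs <;> first | ring1 | simp_all

theorem master_equation_of_recurrences {α1 α2 α3 α4 α5 α6 : ℝ} {fA fB fC : ℤ → ℝ}
    (hA : ∀ n : ℤ, (α4 * n + α5 * n * (n - 1)) * fA n = α3 * fA (n - 1))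
    (hB : ∀ n : ℤ, α6 * n * (n - 1) * fB n = α3 * fB (n - 1))
    (hC : ∀ n : ℤ, α1 * n * fC n = (α2 + α3) * fC (n - 1))
    {π : ℤ → ℤ → ℤ → ℝ} (hπ : ∀ a b c, π a b c = fA a * fB b * fC c)
    (a b c : ℤ) :
    α1 * ((c + 1 : ℤ) : ℝ) * π a b (c + 1)
        + α2 * π a b (c - 1)
        + α3 * π (a - 1) b c
        + (α4 * ((a + 1 : ℤ) : ℝ) + α5 * ((a + 1 : ℤ) : ℝ) * (((a + 1 : ℤ) : ℝ) - 1))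
          * π (a + 1) (b - 1) c
        + α6 * ((b + 1 : ℤ) : ℝ) * (((b + 1 : ℤ) : ℝ) - 1) * π a (b + 1) (c - 1)
      = (α1 * c + α2 + α3 + (α4 * a + α5 * a * (a - 1)) + α6 * b * (b - 1)) * π a b c := by
  have hA₁ := hA (a + 1)
  have hB₁ := hB (b + 1)
  have hC₁ := hC (c + 1)
  simp only [add_sub_cancel_right] at hA₁ hB₁ hC₁
  simp only [hπ]
  linear_combination fA a * fB b * hC₁ - fB b * fC c * hA a + fB (b - 1) * fC c * hA₁
    - fA a * fC c * hB b + fA a * fC (c - 1) * hB₁ - fA a * fB b * hC c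

theorem stmt_14_general (α1 α2 α3 α4 α5 α6 : ℝ)
    (h1 : 0 < α1)
    (h4 : 0 < α4) (h5 : 0 < α5) (h6 : 0 < α6)
    (θ : ℤ → ℤ → ℤ → ℝ)
    (hθ : ∀ nA nB nC : ℤ, θ nA nB nC =
      (nB.toNat.factorial : ℝ) * ((nB - 1).toNat.factorial : ℝ) *
        (nC.toNat.factorial : ℝ) *
        ∏ j ∈ Finset.range nA.toNat,
          (α4 * ((nA : ℝ) - j) + α5 * ((nA : ℝ) - j) * ((nA : ℝ) - j - 1)) / α5)
    (cA cB cC : ℝ)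
    (hcA : cA = α3 / α5) (hcB : cB = α3 / α6) (hcC : cC = (α2 + α3) / α1)
    (π : ℤ → ℤ → ℤ → ℝ)
    (hπ : ∀ nA nB nC : ℤ, π nA nB nC =
      if 0 ≤ nA ∧ 1 ≤ nB ∧ 0 ≤ nC then cA ^ nA * cB ^ nB * cC ^ nC / θ nA nB nC else 0)
    (lam1 lam2 lam3 lam4 lam5 : ℤ → ℤ → ℤ → ℝ)
    (hlam1 : ∀ nA nB nC : ℤ, lam1 nA nB nC = α1 * (nC : ℝ))
    (hlam2 : ∀ nA nB nC : ℤ, lam2 nA nB nC = α2)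
    (hlam3 : ∀ nA nB nC : ℤ, lam3 nA nB nC = α3)
    (hlam4 : ∀ nA nB nC : ℤ, lam4 nA nB nC =
      α4 * (nA : ℝ) + α5 * (nA : ℝ) * ((nA : ℝ) - 1))
    (hlam5 : ∀ nA nB nC : ℤ, lam5 nA nB nC = α6 * (nB : ℝ) * ((nB : ℝ) - 1)) :
    ∀ nA nB nC : ℤ,
      lam1 nA nB (nC + 1) * π nA nB (nC + 1)
        + lam2 nA nB (nC - 1) * π nA nB (nC - 1)
        + lam3 (nA - 1) nB nC * π (nA - 1) nB nC
        + lam4 (nA + 1) (nB - 1) nC * π (nA + 1) (nB - 1) nC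
        + lam5 nA (nB + 1) (nC - 1) * π nA (nB + 1) (nC - 1)
      = (lam1 nA nB nC + lam2 nA nB nC + lam3 nA nB nC
          + lam4 nA nB nC + lam5 nA nB nC) * π nA nB nC := by
  set g : ℝ → ℝ := fun x => (α4 * x + α5 * x * (x - 1)) / α5 with hg
  have hπ_prod (a b c : ℤ) :
      π a b c = prodWeight g cA a * factorialPairWeight cB b * poissonWeight cC c := by
    rw [hπ, hθ]
    exact ite_div_eq_prodWeight_mul g cA cB cC a b c
  have hαA : α5 * cA = α3 := by rw [hcA]; field_simp
  have hαB : α6 * cB = α3 := by rw [hcB]; field_simp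
  have hαC : α1 * cC = α2 + α3 := by rw [hcC]; field_simp
  have hg_mul (x : ℝ) : α5 * g x = α4 * x + α5 * x * (x - 1) := by rw [hg]; field_simp
  have hg_succ (m : ℕ) : g (m + 1) ≠ 0 := by simp only [hg, add_sub_cancel_right]; positivity
  have hA (n : ℤ) :
      (α4 * n + α5 * n * (n - 1)) * prodWeight g cA n = α3 * prodWeight g cA (n - 1) := by
    linear_combination α5 * prodWeight_recurrence (by simp [hg]) hg_succ cA n
      - prodWeight g cA n * hg_mul n + prodWeight g cA (n - 1) * hαA
  have hB (n : ℤ) :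
      α6 * n * (n - 1) * factorialPairWeight cB n = α3 * factorialPairWeight cB (n - 1) := by
    linear_combination α6 * factorialPairWeight_recurrence cB n
      + factorialPairWeight cB (n - 1) * hαB
  have hC (n : ℤ) : α1 * n * poissonWeight cC n = (α2 + α3) * poissonWeight cC (n - 1) := by
    linear_combination α1 * poissonWeight_recurrence cC n + poissonWeight cC (n - 1) * hαC
  intro nA nB nC
  simp only [hlam1, hlam2, hlam3, hlam4, hlam5]
  exact master_equation_of_recurrences hA hB hC hπ_prod nA nB nC

open Classical in
/-- For the translated network `C ⇌ 0 → A → B → C` with propensities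
`λ1 = α1 n_C`, `λ2 = α2`, `λ3 = α3`, `λ4 = α4 n_A + α5 n_A (n_A - 1)`,
`λ5 = α6 n_B (n_B - 1)`, the measure `π(n) = c_A^{n_A} c_B^{n_B} c_C^{n_C} / θ(n)`
for `n_B ≥ 1` (and `0` otherwise), with
`θ(n) = n_B! (n_B-1)! n_C! ∏_{j=1}^{n_A} (α4 (n_A-j+1) + α5 (n_A-j+1)(n_A-j))/α5`
and `c = (α3/α5, α3/α6, (α2+α3)/α1)`, satisfies the stationarity equations of the
chemical master equation. -/
theorem stmt_14 (α1 α2 α3 α4 α5 α6 : ℝ)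
    (h1 : 0 < α1) (h2 : 0 < α2) (h3 : 0 < α3)
    (h4 : 0 < α4) (h5 : 0 < α5) (h6 : 0 < α6)
    (θ : ℤ → ℤ → ℤ → ℝ)
    (hθ : ∀ nA nB nC : ℤ, θ nA nB nC =
      (nB.toNat.factorial : ℝ) * ((nB - 1).toNat.factorial : ℝ) *
        (nC.toNat.factorial : ℝ) *
        ∏ j ∈ Finset.range nA.toNat,
          (α4 * ((nA : ℝ) - j) + α5 * ((nA : ℝ) - j) * ((nA : ℝ) - j - 1)) / α5)
    (cA cB cC : ℝ)
    (hcA : cA = α3 / α5) (hcB : cB = α3 / α6) (hcC : cC = (α2 + α3) / α1)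
    (π : ℤ → ℤ → ℤ → ℝ)
    (hπ : ∀ nA nB nC : ℤ, π nA nB nC =
      if 0 ≤ nA ∧ 1 ≤ nB ∧ 0 ≤ nC then cA ^ nA * cB ^ nB * cC ^ nC / θ nA nB nC else 0)
    (lam1 lam2 lam3 lam4 lam5 : ℤ → ℤ → ℤ → ℝ)
    (hlam1 : ∀ nA nB nC : ℤ, lam1 nA nB nC = α1 * (nC : ℝ))
    (hlam2 : ∀ nA nB nC : ℤ, lam2 nA nB nC = α2)
    (hlam3 : ∀ nA nB nC : ℤ, lam3 nA nB nC = α3)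
    (hlam4 : ∀ nA nB nC : ℤ, lam4 nA nB nC =
      α4 * (nA : ℝ) + α5 * (nA : ℝ) * ((nA : ℝ) - 1))
    (hlam5 : ∀ nA nB nC : ℤ, lam5 nA nB nC = α6 * (nB : ℝ) * ((nB : ℝ) - 1)) :
    ∀ nA nB nC : ℤ,
      lam1 nA nB (nC + 1) * π nA nB (nC + 1)
        + lam2 nA nB (nC - 1) * π nA nB (nC - 1)
        + lam3 (nA - 1) nB nC * π (nA - 1) nB nC
        + lam4 (nA + 1) (nB - 1) nC * π (nA + 1) (nB - 1) nC
        + lam5 nA (nB + 1) (nC - 1) * π nA (nB + 1) (nC - 1)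
      = (lam1 nA nB nC + lam2 nA nB nC + lam3 nA nB nC
          + lam4 nA nB nC + lam5 nA nB nC) * π nA nB nC :=
  stmt_14_general α1 α2 α3 α4 α5 α6 h1 h4 h5 h6 θ hθ cA cB cC hcA hcB hcC π hπ lam1 lam2 lam3 lam4
    lam5 hlam1 hlam2 hlam3 hlam4 hlam5
end
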